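/- arXiv:2005.03147 — 2 statements merged into one kernel-verified Lean document; each statement's English description precedes it below -/
import Mathlib

section
/- Let f : (−δ₀, δ₀) → ℝ be the function f(x) = (3π/2 · F_SC(x² − 2))^{1/3} (extended appropriately near 0). Then the Taylor expansion of f at 0 begins f(x) = x − x³/40 − (39/22400)x⁵ + O(x⁷). -/
/-!
On `[0, 2]` the double-angle formula turns `3π/2 · F_SC(x² − 2)` into
`G x = 3 arcsin (x / 2) + 3/8 · x (x² − 2) √(4 − x²)`, whose derivative is `3/2 · x² √(4 − x²)`.
Integrating the Taylor polynomial of `√(4 − u)` gives `G x = x³ − 3x⁵/40 − 3x⁷/896 + O(x⁹)`,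
which agrees with `p³` up to `O(x⁹)` for `p = x − x³/40 − 39x⁵/22400`. Since `p ≥ x/2`, the
factorisation `A³ − p³ = (A − p)(A² + Ap + p²)` divides this error by at least `x²/4`.
-/

open Real Set Filter Asymptotics Topology

noncomputable def FSC (y : ℝ) : ℝ :=
  1 / 2 + (1 / π) * (y * Real.sqrt (4 - y ^ 2) / 4 + Real.arcsin (y / 2))

noncomputable def fRSK (x : ℝ) : ℝ := (3 * π / 2 * FSC (x ^ 2 - 2)) ^ ((1 : ℝ) / 3)

noncomputable def fRSKCube (x : ℝ) : ℝ :=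
  3 * arcsin (x / 2) + 3 / 8 * x * (x ^ 2 - 2) * √(4 - x ^ 2)

lemma arcsin_sq_div_two_sub_one {x : ℝ} (hx0 : 0 ≤ x) (hx2 : x ≤ 2) :
    arcsin (x ^ 2 / 2 - 1) = 2 * arcsin (x / 2) - π / 2 := by
  have hsin : sin (arcsin (x / 2)) = x / 2 := sin_arcsin (by linarith) (by linarith)
  have hθ0 : 0 ≤ arcsin (x / 2) := arcsin_nonneg.2 (by linarith)
  have hθπ : arcsin (x / 2) ≤ π / 2 := arcsin_le_pi_div_two _
  have key : sin (2 * arcsin (x / 2) - π / 2) = x ^ 2 / 2 - 1 := by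
    rw [sin_sub_pi_div_two, cos_two_mul, cos_sq', hsin]
    ring
  rw [← key, arcsin_sin (by linarith) (by linarith)]

lemma three_pi_div_two_mul_FSC_sq_sub_two {x : ℝ} (hx0 : 0 ≤ x) (hx2 : x ≤ 2) :
    3 * π / 2 * FSC (x ^ 2 - 2) = fRSKCube x := by
  have hsqrt : √(4 - (x ^ 2 - 2) ^ 2) = x * √(4 - x ^ 2) := by
    rw [show 4 - (x ^ 2 - 2) ^ 2 = x ^ 2 * (4 - x ^ 2) by ring,
      sqrt_mul (sq_nonneg x), sqrt_sq hx0]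
  have harcsin : arcsin ((x ^ 2 - 2) / 2) = 2 * arcsin (x / 2) - π / 2 := by
    rw [← arcsin_sq_div_two_sub_one hx0 hx2]
    ring_nf
  rw [FSC, hsqrt, harcsin, fRSKCube]
  field_simp
  ring

lemma hasDerivAt_fRSKCube {t : ℝ} (ht : t ^ 2 < 4) :
    HasDerivAt fRSKCube (3 / 2 * t ^ 2 * √(4 - t ^ 2)) t := by
  have h4 : 0 < 4 - t ^ 2 := by linarith
  have hsq : √(4 - t ^ 2) ^ 2 = 4 - t ^ 2 := sq_sqrt h4.le
  have hsqrt_half : √(1 - (t / 2) ^ 2) = √(4 - t ^ 2) / 2 := by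
    rw [show 1 - (t / 2) ^ 2 = (4 - t ^ 2) / 2 ^ 2 by ring, sqrt_div' _ (by positivity),
      sqrt_sq zero_le_two]
  have harcsin : HasDerivAt (fun y => arcsin (y / 2)) (1 / √(1 - (t / 2) ^ 2) * (1 / 2)) t :=
    (hasDerivAt_arcsin (by nlinarith) (by nlinarith)).comp t ((hasDerivAt_id t).div_const 2)
  have hroot : HasDerivAt (fun y => √(4 - y ^ 2)) (1 / (2 * √(4 - t ^ 2)) * -(2 * t)) t := by
    refine (hasDerivAt_sqrt h4.ne').comp t ?_
    simpa using (hasDerivAt_pow 2 t).const_sub 4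
  have hpoly : HasDerivAt (fun y => 3 / 8 * y * (y ^ 2 - 2)) (3 / 8 * (3 * t ^ 2 - 2)) t := by
    refine (((hasDerivAt_id t).const_mul (3 / 8 : ℝ)).mul
      ((hasDerivAt_pow 2 t).sub_const 2)).congr_deriv ?_
    simp only [id, Nat.cast_ofNat]
    ring
  refine ((harcsin.const_mul 3).add (hpoly.mul hroot)).congr_deriv ?_
  rw [hsqrt_half]
  field_simp
  linear_combination -2 * (2 + t ^ 2) * hsq

lemma abs_sqrt_four_sub_sub_le {u : ℝ} (hu0 : 0 ≤ u) (hu1 : u ≤ 1) :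
    |√(4 - u) - (2 - u / 4 - u ^ 2 / 64)| ≤ u ^ 3 := by
  have hupper : √(4 - u) ≤ 2 - u / 4 - u ^ 2 / 64 :=
    (sqrt_le_left (by nlinarith)).2 (by nlinarith [pow_nonneg hu0 3, pow_nonneg hu0 4])
  have hlower : 2 - u / 4 - u ^ 2 / 64 - u ^ 3 ≤ √(4 - u) := by
    have hu3 : u ^ 3 ≤ 1 := pow_le_one₀ hu0 hu1
    refine (le_sqrt (by nlinarith) (by linarith)).2 ?_
    nlinarith [pow_nonneg hu0 3, mul_nonneg (pow_nonneg hu0 3) hu0,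
      mul_nonneg (pow_nonneg hu0 3) (sub_nonneg.2 hu1),
      mul_nonneg (pow_nonneg hu0 3) (sub_nonneg.2 hu3)]
  rw [abs_le]
  constructor <;> linarith

lemma abs_fRSKCube_sub_le {x : ℝ} (hx0 : 0 ≤ x) (hx1 : x ≤ 1) :
    |fRSKCube x - (x ^ 3 - 3 * x ^ 5 / 40 - 3 * x ^ 7 / 896)| ≤ 3 / 2 * x ^ 9 := by
  set q : ℝ → ℝ := fun t => t ^ 3 - 3 * t ^ 5 / 40 - 3 * t ^ 7 / 896
  have hq : ∀ t, HasDerivAt q (3 / 2 * t ^ 2 * (2 - t ^ 2 / 4 - (t ^ 2) ^ 2 / 64)) t := by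
    intro t
    refine (((hasDerivAt_pow 3 t).sub (((hasDerivAt_pow 5 t).const_mul 3).div_const 40)).sub
      (((hasDerivAt_pow 7 t).const_mul 3).div_const 896)).congr_deriv ?_
    push_cast
    ring
  have hderiv : ∀ t ∈ Icc 0 x, HasDerivWithinAt (fun t => fRSKCube t - q t)
      (3 / 2 * t ^ 2 * (√(4 - t ^ 2) - (2 - t ^ 2 / 4 - (t ^ 2) ^ 2 / 64))) (Icc 0 x) t := by
    intro t ht
    have ht2 : t ^ 2 < 4 := by nlinarith [ht.1, ht.2]
    refine ((hasDerivAt_fRSKCube ht2).sub (hq t)).hasDerivWithinAt.congr_deriv ?_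
    ring
  have hbound : ∀ t ∈ Icc 0 x,
      ‖3 / 2 * t ^ 2 * (√(4 - t ^ 2) - (2 - t ^ 2 / 4 - (t ^ 2) ^ 2 / 64))‖ ≤ 3 / 2 * x ^ 8 := by
    rintro t ⟨ht0, htx⟩
    have htaylor := abs_sqrt_four_sub_sub_le (sq_nonneg t) (by nlinarith)
    rw [norm_mul, norm_of_nonneg (by positivity)]
    calc 3 / 2 * t ^ 2 * ‖√(4 - t ^ 2) - (2 - t ^ 2 / 4 - (t ^ 2) ^ 2 / 64)‖
        ≤ 3 / 2 * t ^ 2 * (t ^ 2) ^ 3 := by gcongr; exact htaylor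
      _ = 3 / 2 * t ^ 8 := by ring
      _ ≤ 3 / 2 * x ^ 8 := by gcongr
  have hmvt := (convex_Icc 0 x).norm_image_sub_le_of_norm_hasDerivWithin_le hderiv hbound
    (left_mem_Icc.2 hx0) (right_mem_Icc.2 hx0)
  norm_num [fRSKCube, q, abs_of_nonneg hx0] at hmvt
  rw [fRSKCube]
  linarith

lemma abs_sub_mul_sq_le_abs_pow_three_sub {a p : ℝ} (ha : 0 ≤ a) (hp : 0 ≤ p) :
    |a - p| * p ^ 2 ≤ |a ^ 3 - p ^ 3| := by
  rw [show a ^ 3 - p ^ 3 = (a - p) * (a ^ 2 + a * p + p ^ 2) by ring, abs_mul,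
    abs_of_nonneg (by positivity : 0 ≤ a ^ 2 + a * p + p ^ 2)]
  exact mul_le_mul_of_nonneg_left (by nlinarith [mul_nonneg ha hp]) (abs_nonneg _)

-- `x⁹` times a polynomial in `x²` whose coefficients are all tiny
lemma abs_cubeTaylor_sub_cube_le {x : ℝ} (hx : x ^ 2 ≤ 1 / 4) :
    |x ^ 3 - 3 * x ^ 5 / 40 - 3 * x ^ 7 / 896 - (x - x ^ 3 / 40 - 39 / 22400 * x ^ 5) ^ 3|
      ≤ 1 / 2 * |x| ^ 9 := by
  rw [show x ^ 3 - 3 * x ^ 5 / 40 - 3 * x ^ 7 / 896 - (x - x ^ 3 / 40 - 39 / 22400 * x ^ 5) ^ 3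
      = x ^ 9 * (-(11 / 44800) - 117 / 20070400 * x ^ 2 + 4563 / 20070400000 * (x ^ 2) ^ 2
        + 59319 / 11239424000000 * (x ^ 2) ^ 3) by ring, abs_mul, abs_pow, mul_comm (1 / 2 : ℝ)]
  gcongr
  rw [abs_le]
  constructor <;> nlinarith [sq_nonneg x, pow_nonneg (sq_nonneg x) 2, pow_nonneg (sq_nonneg x) 3]

lemma abs_fRSKCube_sub_cube_le {x : ℝ} (hx0 : 0 ≤ x) (hx : x ≤ 1 / 2) :
    |fRSKCube x - (x - x ^ 3 / 40 - 39 / 22400 * x ^ 5) ^ 3| ≤ 2 * x ^ 9 := by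
  have hG := abs_fRSKCube_sub_le hx0 (by linarith)
  have hpoly := abs_cubeTaylor_sub_cube_le (x := x) (by nlinarith)
  rw [abs_of_nonneg hx0] at hpoly
  have := abs_sub_le (fRSKCube x) (x ^ 3 - 3 * x ^ 5 / 40 - 3 * x ^ 7 / 896)
    ((x - x ^ 3 / 40 - 39 / 22400 * x ^ 5) ^ 3)
  linarith

lemma abs_fRSK_sub_le {x : ℝ} (hx0 : 0 ≤ x) (hx : x ≤ 1 / 2) :
    |fRSK x - (x - x ^ 3 / 40 - 39 / 22400 * x ^ 5)| ≤ 8 * x ^ 7 := by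
  have hGp := abs_fRSKCube_sub_cube_le hx0 hx
  set p := x - x ^ 3 / 40 - 39 / 22400 * x ^ 5 with hp_def
  have hx2 : x ^ 2 ≤ 1 / 4 := by nlinarith
  have hp : x / 2 ≤ p := by
    nlinarith [mul_le_mul_of_nonneg_left hx2 hx0, mul_le_mul_of_nonneg_left hx2 (pow_nonneg hx0 3)]
  have hG0 : 0 ≤ fRSKCube x := by
    have hx6 : x ^ 6 ≤ 1 / 64 := by nlinarith [pow_le_pow_left₀ (sq_nonneg x) hx2 3]
    nlinarith [(abs_le.1 hGp).1, mul_le_mul_of_nonneg_left hx6 (pow_nonneg hx0 3),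
      pow_le_pow_left₀ (by linarith) hp 3]
  set A := fRSKCube x ^ ((1 : ℝ) / 3)
  have hA : A ^ 3 = fRSKCube x := by simpa [A] using rpow_inv_natCast_pow hG0 three_ne_zero
  have hroot : |A - p| * x ^ 2 ≤ 8 * x ^ 7 * x ^ 2 := by
    have := abs_sub_mul_sq_le_abs_pow_three_sub (rpow_nonneg hG0 ((1 : ℝ) / 3))
      (by linarith : 0 ≤ p)
    rw [hA] at this
    nlinarith [abs_nonneg (A - p), pow_le_pow_left₀ (by linarith) hp 2]
  rw [fRSK, three_pi_div_two_mul_FSC_sq_sub_two hx0 (by linarith)]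
  rcases hx0.eq_or_lt with rfl | hxpos
  · simp [fRSKCube, p]
  · exact le_of_mul_le_mul_right hroot (pow_pos hxpos 2)

theorem fRSK_taylor :
    (fun x => fRSK x - (x - x ^ 3 / 40 - (39 / 22400) * x ^ 5))
      =O[𝓝[Set.Ici (0 : ℝ)] 0] fun x => x ^ 7 := by
  refine isBigO_iff.2 ⟨8, ?_⟩
  filter_upwards [Ico_mem_nhdsGE (by norm_num : (0 : ℝ) < 1 / 2)] with x hx
  rw [norm_eq_abs, norm_of_nonneg (pow_nonneg hx.1 7)]
  exact abs_fRSK_sub_le hx.1 hx.2.le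
end

section
/- Suppose G : [a,b] → ℝ² is continuous and increasing with respect to the partial order ≺, and for each n, G_n : [a,b] → ℝ² is increasing with respect to ≺ and G_n(x) → G(x) in probability for each fixed x ∈ [a,b]. If A_n are [a,b]-valued random variables with A_n → A in probability for a constant A ∈ [a,b], then G_n(A_n) → G(A) in probability. -/
/-! For `c ≤ A ≤ d` in `[a, b]` close to `A`, monotonicity gives `Gₙ(c) ≺ Gₙ(Aₙ) ≺ Gₙ(d)`
whenever `Aₙ ∈ [c, d]`, and a point `≺`-between two points of a sup-norm ball lies in that ball.
With high probability `Aₙ ∈ [c, d]` and `Gₙ(c)`, `Gₙ(d)` are close to `G(c)`, `G(d)`, which by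
continuity are close to `G(A)`. Since `eucNorm` is equivalent to the sup norm, convergence in
probability may be measured in either. -/

open MeasureTheory ProbabilityTheory Filter Topology

def prec (p q : ℝ × ℝ) : Prop := p.1 ≤ q.1 ∧ q.2 ≤ p.2

noncomputable def eucNorm (p : ℝ × ℝ) : ℝ := Real.sqrt (p.1 ^ 2 + p.2 ^ 2)

open Set

lemma norm_le_eucNorm (p : ℝ × ℝ) : ‖p‖ ≤ eucNorm p := by
  rw [Prod.norm_def, Real.norm_eq_abs, Real.norm_eq_abs, eucNorm]
  refine max_le ?_ ?_ <;>
  · rw [Real.le_sqrt (abs_nonneg _) (by positivity), sq_abs]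
    nlinarith [sq_nonneg p.1, sq_nonneg p.2]

lemma eucNorm_le_two_mul_norm (p : ℝ × ℝ) : eucNorm p ≤ 2 * ‖p‖ := by
  have h₁ : |p.1| ≤ ‖p‖ := by simpa only [Real.norm_eq_abs] using norm_fst_le p
  have h₂ : |p.2| ≤ ‖p‖ := by simpa only [Real.norm_eq_abs] using norm_snd_le p
  rw [eucNorm, Real.sqrt_le_iff]
  refine ⟨by positivity, ?_⟩
  nlinarith [sq_abs p.1, sq_abs p.2, abs_nonneg p.1, abs_nonneg p.2]

lemma dist_lt_of_prec_of_prec {l x u z : ℝ × ℝ} {r : ℝ} (hlx : prec l x) (hxu : prec x u)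
    (hl : dist l z < r) (hu : dist u z < r) : dist x z < r := by
  obtain ⟨hlx₁, hlx₂⟩ := hlx
  obtain ⟨hxu₁, hxu₂⟩ := hxu
  simp only [Prod.dist_eq, Real.dist_eq, max_lt_iff, abs_sub_lt_iff] at hl hu ⊢
  refine ⟨⟨?_, ?_⟩, ?_, ?_⟩ <;> linarith

lemma ContinuousWithinAt.exists_bracket {X : Type*} [PseudoMetricSpace X] {G : ℝ → X}
    {a b A : ℝ} (hG : ContinuousWithinAt G (Icc a b) A) (hA : A ∈ Icc a b) {ε : ℝ}
    (hε : 0 < ε) :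
    ∃ c ∈ Icc a b, ∃ d ∈ Icc a b, dist (G c) (G A) < ε ∧ dist (G d) (G A) < ε ∧
      ∃ η > 0, ∀ x ∈ Icc a b, dist x A < η → x ∈ Icc c d := by
  obtain ⟨δ, hδ, hδG⟩ := Metric.continuousWithinAt_iff.1 hG ε hε
  set c := max a (A - δ / 2)
  set d := min b (A + δ / 2)
  have hcA : c ≤ A := max_le hA.1 (by linarith)
  have hAd : A ≤ d := le_min hA.2 (by linarith)
  have hclose : ∀ x ∈ Icc c d, dist x A < δ := by
    rintro x ⟨hcx, hxd⟩
    rw [Real.dist_eq, abs_sub_lt_iff]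
    constructor <;> linarith [le_max_right a (A - δ / 2), min_le_right b (A + δ / 2)]
  have hc : c ∈ Icc a b := ⟨le_max_left _ _, hcA.trans hA.2⟩
  have hd : d ∈ Icc a b := ⟨hA.1.trans hAd, min_le_left _ _⟩
  refine ⟨c, hc, d, hd, hδG hc (hclose c ⟨le_rfl, hcA.trans hAd⟩),
    hδG hd (hclose d ⟨hcA.trans hAd, le_rfl⟩), δ / 2, by positivity, fun x hx hxA => ?_⟩
  rw [Real.dist_eq, abs_sub_lt_iff] at hxA
  exact ⟨max_le hx.1 (by linarith), le_min hx.2 (by linarith)⟩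

section

variable {Ω ι : Type*} [MeasurableSpace Ω] {μ : Measure Ω} {l : Filter ι}

lemma tendsto_measure_zero_of_subset {s t : ι → Set Ω}
    (ht : Tendsto (fun i => μ (t i)) l (𝓝 0)) (hst : ∀ i, s i ⊆ t i) :
    Tendsto (fun i => μ (s i)) l (𝓝 0) :=
  tendsto_of_tendsto_of_tendsto_of_le_of_le tendsto_const_nhds ht (fun _ => zero_le)
    fun i => measure_mono (hst i)

lemma tendsto_measure_zero_of_subset_union {s t u : ι → Set Ω}
    (ht : Tendsto (fun i => μ (t i)) l (𝓝 0)) (hu : Tendsto (fun i => μ (u i)) l (𝓝 0))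
    (hstu : ∀ i, s i ⊆ t i ∪ u i) : Tendsto (fun i => μ (s i)) l (𝓝 0) := by
  have htu : Tendsto (fun i => μ (t i) + μ (u i)) l (𝓝 0) := by
    simpa only [add_zero] using ht.add hu
  exact tendsto_of_tendsto_of_tendsto_of_le_of_le tendsto_const_nhds htu (fun _ => zero_le)
    fun i => (measure_mono (hstu i)).trans (measure_union_le _ _)

lemma tendstoInMeasure_iff_eucNorm {f : ι → Ω → ℝ × ℝ} {g : Ω → ℝ × ℝ} :
    TendstoInMeasure μ f l g ↔
      ∀ ε > (0 : ℝ), Tendsto (fun i => μ {ω | ε ≤ eucNorm (f i ω - g ω)}) l (𝓝 0) := by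
  rw [tendstoInMeasure_iff_dist]
  refine ⟨fun h ε hε => tendsto_measure_zero_of_subset (h (ε / 2) (by positivity))
    fun i ω hω => ?_, fun h ε hε => tendsto_measure_zero_of_subset (h ε hε) fun i ω hω => ?_⟩
  · have := eucNorm_le_two_mul_norm (f i ω - g ω)
    simp only [mem_ofPred_eq, dist_eq_norm] at hω ⊢
    linarith
  · simp only [mem_ofPred_eq, dist_eq_norm] at hω ⊢
    exact hω.trans (norm_le_eucNorm _)

theorem tendstoInMeasure_apply_of_prec_mono {a b A : ℝ} {G : ℝ → ℝ × ℝ}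
    (hG : ContinuousWithinAt G (Icc a b) A) (hA : A ∈ Icc a b) {Gn : ι → ℝ → Ω → ℝ × ℝ}
    (hGn_mono : ∀ i ω, ∀ x ∈ Icc a b, ∀ y ∈ Icc a b, x ≤ y → prec (Gn i x ω) (Gn i y ω))
    (hGn : ∀ x ∈ Icc a b, TendstoInMeasure μ (fun i => Gn i x) l (fun _ => G x))
    {An : ι → Ω → ℝ} (hAn_mem : ∀ i ω, An i ω ∈ Icc a b)
    (hAn : TendstoInMeasure μ An l (fun _ => A)) :
    TendstoInMeasure μ (fun i ω => Gn i (An i ω) ω) l (fun _ => G A) := by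
  simp only [tendstoInMeasure_iff_dist] at hAn hGn ⊢
  intro ε hε
  obtain ⟨c, hc, d, hd, hGc, hGd, η, hη, hcd⟩ := hG.exists_bracket hA (half_pos hε)
  refine tendsto_measure_zero_of_subset_union (hAn η hη)
    (tendsto_measure_zero_of_subset_union (hGn c hc _ (half_pos hε)) (hGn d hd _ (half_pos hε))
      fun _ => subset_rfl) fun i ω hω => ?_
  by_contra hgood
  simp only [mem_union, mem_ofPred_eq, not_or, not_le] at hω hgood
  obtain ⟨hAnA, hGnc, hGnd⟩ := hgood
  obtain ⟨hcAn, hAnd⟩ := hcd _ (hAn_mem i ω) hAnA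
  have hlow : dist (Gn i c ω) (G A) < ε := by
    linarith [dist_triangle (Gn i c ω) (G c) (G A)]
  have hupp : dist (Gn i d ω) (G A) < ε := by
    linarith [dist_triangle (Gn i d ω) (G d) (G A)]
  exact hω.not_gt <| dist_lt_of_prec_of_prec (hGn_mono i ω c hc _ (hAn_mem i ω) hcAn)
    (hGn_mono i ω _ (hAn_mem i ω) d hd hAnd) hlow hupp

end

theorem monotone_sandwich_convergence_in_probability_general
    {Ω : Type*} [MeasureSpace Ω]
    (a b : ℝ)
    (G : ℝ → ℝ × ℝ) (hGc : ContinuousOn G (Set.Icc a b))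
    (Gn : ℕ → ℝ → Ω → ℝ × ℝ)
    (hGnmono : ∀ n ω, ∀ x ∈ Set.Icc a b, ∀ y ∈ Set.Icc a b, x ≤ y →
      prec (Gn n x ω) (Gn n y ω))
    (hGnconv : ∀ x ∈ Set.Icc a b, ∀ ε > (0 : ℝ),
      Tendsto (fun n => ℙ {ω | ε ≤ eucNorm (Gn n x ω - G x)}) atTop (𝓝 0))
    (A : ℝ) (hA : A ∈ Set.Icc a b)
    (An : ℕ → Ω → ℝ) (hAn : ∀ n ω, An n ω ∈ Set.Icc a b)
    (hAconv : ∀ δ > (0 : ℝ),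
      Tendsto (fun n => ℙ {ω | δ ≤ |An n ω - A|}) atTop (𝓝 0)) :
    ∀ ε > (0 : ℝ),
      Tendsto (fun n => ℙ {ω | ε ≤ eucNorm (Gn n (An n ω) ω - G A)}) atTop (𝓝 0) := by
  refine tendstoInMeasure_iff_eucNorm.1 <| tendstoInMeasure_apply_of_prec_mono (hGc A hA) hA
    hGnmono (fun x hx => tendstoInMeasure_iff_eucNorm.2 (hGnconv x hx)) hAn ?_
  rw [tendstoInMeasure_iff_dist]
  simpa only [Real.dist_eq] using hAconv

theorem monotone_sandwich_convergence_in_probability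
    {Ω : Type*} [MeasureSpace Ω] (hP : IsProbabilityMeasure (ℙ : Measure Ω))
    (a b : ℝ) (hab : a ≤ b)
    (G : ℝ → ℝ × ℝ) (hGc : ContinuousOn G (Set.Icc a b))
    (hGmono : ∀ x ∈ Set.Icc a b, ∀ y ∈ Set.Icc a b, x ≤ y → prec (G x) (G y))
    (Gn : ℕ → ℝ → Ω → ℝ × ℝ)
    (hGnmono : ∀ n ω, ∀ x ∈ Set.Icc a b, ∀ y ∈ Set.Icc a b, x ≤ y →
      prec (Gn n x ω) (Gn n y ω))
    (hGnconv : ∀ x ∈ Set.Icc a b, ∀ ε > (0 : ℝ),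
      Tendsto (fun n => ℙ {ω | ε ≤ eucNorm (Gn n x ω - G x)}) atTop (𝓝 0))
    (A : ℝ) (hA : A ∈ Set.Icc a b)
    (An : ℕ → Ω → ℝ) (hAn : ∀ n ω, An n ω ∈ Set.Icc a b)
    (hAconv : ∀ δ > (0 : ℝ),
      Tendsto (fun n => ℙ {ω | δ ≤ |An n ω - A|}) atTop (𝓝 0)) :
    ∀ ε > (0 : ℝ),
      Tendsto (fun n => ℙ {ω | ε ≤ eucNorm (Gn n (An n ω) ω - G A)}) atTop (𝓝 0) :=
  monotone_sandwich_convergence_in_probability_general a b G hGc Gn hGnmono hGnconv A hA An hAn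
    hAconv
end
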